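/- Let n ≥ 1 and φ ∈ (−π/2, π/2). Then the following two contour-shift identities hold, with all integrals absolutely convergent: (i) ∫_ℝ (sinh λ/λ)^{1/2} cosh λ · (cosh(λ−iφ))^{−(n+3/2)} dλ = A_n(iφ); (ii) ∫_ℝ λ·(sinh λ/λ)^{3/2} · (cosh(λ−iφ))^{−(n+3/2)} dλ = B_n(iφ). Here (sinh λ/λ)^{1/2} and (sinh λ/λ)^{3/2} are real powers of the positive quantity sinh λ/λ (extended by 1 at λ = 0), and (cosh(λ−iφ))^{−(n+3/2)} is the principal-branch complex power (the base has real part cosh λ · cos φ > 0). -/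

import Mathlib

/-!
Both integrands on the left are restrictions to `ℝ` of `F(w) = h(w) cosh(w - iφ)^(-n-3/2)`, with
`h(w) = sinhc(w)^(1/2) cosh w`, resp. `h(w) = w sinhc(w)^(3/2)`, and the right-hand sides are the
integrals of `F` along `ℝ + iφ`. On the strip between the two lines (inside `|Im w| < π/2`) both
`sinhc w` and `cosh(w - iφ)` have positive real part, so `F` is holomorphic there. Moreover
`‖h(w)‖ ≤ (1 + ‖w‖) cosh(Re w)^(3/2)` and `Re cosh(w - iφ) ≥ cos φ cosh(Re w)`, so
`‖F(w)‖ ≲ (1 + |Re w|) cosh(Re w)^(-n)`, which for `n ≥ 1` decays like `exp(-|Re w|/2)`.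
Cauchy's theorem on the rectangles `[-T, T] × [0, φ]` and `T → ∞` then move the line of
integration.
-/

open MeasureTheory Topology Filter Set

noncomputable section

/-- `sinh(ζ)/ζ`, extended by `1` at `ζ = 0`. -/
def sinhc (z : ℂ) : ℂ := if z = 0 then 1 else Complex.sinh z / z

/-- `A_n(w) = ∫_ℝ (sinh(λ+w)/(λ+w))^{1/2} cosh(λ+w) (cosh λ)^{−n−3/2} dλ`
(principal branch powers). -/
def An (n : ℕ) (w : ℂ) : ℂ :=
  ∫ l : ℝ, sinhc (l + w) ^ ((1 : ℂ) / 2) * Complex.cosh (l + w) *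
    Complex.cosh (l : ℂ) ^ (-(n : ℂ) - 3 / 2)

/-- `B_n(w) = ∫_ℝ (λ+w)(sinh(λ+w)/(λ+w))^{3/2} (cosh λ)^{−n−3/2} dλ`
(principal branch powers). -/
def Bn (n : ℕ) (w : ℂ) : ℂ :=
  ∫ l : ℝ, ((l : ℂ) + w) * sinhc (l + w) ^ ((3 : ℂ) / 2) *
    Complex.cosh (l : ℂ) ^ (-(n : ℂ) - 3 / 2)

/-- `sinh λ / λ` for real `λ`, extended by `1` at `λ = 0`. -/
def shc (l : ℝ) : ℝ := if l = 0 then 1 else Real.sinh l / l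

namespace Real

theorem sinh_le_mul_cosh {t : ℝ} (ht : 0 ≤ t) : sinh t ≤ t * cosh t := by
  rcases ht.eq_or_lt with rfl | ht
  · simp
  obtain ⟨ξ, hξ, hslope⟩ := exists_hasDerivAt_eq_slope sinh cosh ht
    continuous_sinh.continuousOn fun x _ => hasDerivAt_sinh x
  rw [sinh_zero, sub_zero, sub_zero, eq_div_iff ht.ne'] at hslope
  have : cosh ξ ≤ cosh t :=
    cosh_le_cosh.mpr (abs_le_abs_of_nonneg hξ.1.le hξ.2.le)
  nlinarith

theorem mul_sin_pos {y : ℝ} (hy : |y| < π) (hy0 : y ≠ 0) : 0 < y * sin y := by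
  rcases hy0.lt_or_gt with hneg | hpos
  · exact mul_pos_of_neg_of_neg hneg
      (sin_neg_of_neg_of_neg_pi_lt hneg (by linarith [neg_abs_le y]))
  · exact mul_pos hpos (sin_pos_of_pos_of_lt_pi hpos (by linarith [le_abs_self y]))

theorem mul_sinh_pos {x : ℝ} (hx : x ≠ 0) : 0 < x * sinh x := by
  rcases hx.lt_or_gt with hneg | hpos
  · exact mul_pos_of_neg_of_neg hneg (sinh_neg_iff.mpr hneg)
  · exact mul_pos hpos (sinh_pos_iff.mpr hpos)

theorem inv_cosh_le (x : ℝ) : (cosh x)⁻¹ ≤ 2 * exp (-|x|) := by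
  have : exp |x| ≤ 2 * cosh x := by
    rw [← cosh_abs, cosh_eq]; linarith [exp_pos (-|x|)]
  rw [exp_neg, ← div_eq_mul_inv, le_div_iff₀ (exp_pos _), inv_mul_eq_div,
    div_le_iff₀ (cosh_pos _)]
  linarith

theorem one_add_abs_div_cosh_le (x : ℝ) : (1 + |x|) / cosh x ≤ 4 * exp (-(1 / 2) * |x|) := by
  have hpoly : 1 + |x| ≤ 2 * exp (|x| / 2) := by
    linarith [add_one_le_exp (|x| / 2), abs_nonneg x]
  calc (1 + |x|) / cosh x = (1 + |x|) * (cosh x)⁻¹ := div_eq_mul_inv _ _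
    _ ≤ 2 * exp (|x| / 2) * (2 * exp (-|x|)) := by
        gcongr
        exact inv_cosh_le x
    _ = 4 * exp (-(1 / 2) * |x|) := by
        rw [mul_mul_mul_comm, ← exp_add]; ring_nf

end Real

theorem integrable_exp_neg_abs : Integrable fun x : ℝ => Real.exp (-|x|) := by
  rw [← integrableOn_univ, ← Set.Iic_union_Ioi (a := 0)]
  refine IntegrableOn.union ?_ ?_
  · exact (integrableOn_exp_Iic 0).congr_fun
      (fun x hx => by simp [abs_of_nonpos (Set.mem_Iic.mp hx)]) measurableSet_Iic
  · exact (integrableOn_exp_neg_Ioi 0).congr_fun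
      (fun x hx => by simp [abs_of_pos (Set.mem_Ioi.mp hx)]) measurableSet_Ioi

theorem integrable_exp_neg_mul_abs {b : ℝ} (hb : 0 < b) :
    Integrable fun x : ℝ => Real.exp (-b * |x|) := by
  simpa [abs_mul, abs_of_pos hb] using integrable_exp_neg_abs.comp_mul_left' hb.ne'

theorem tendsto_exp_neg_mul_abs_cocompact {b : ℝ} (hb : 0 < b) :
    Tendsto (fun x : ℝ => Real.exp (-b * |x|)) (cocompact ℝ) (𝓝 0) := by
  have h : Tendsto (fun x : ℝ => b * |x|) (cocompact ℝ) atTop := by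
    simpa only [Real.norm_eq_abs] using
      (tendsto_norm_cocompact_atTop (E := ℝ)).const_mul_atTop hb
  simpa only [neg_mul, Function.comp_def] using
    Real.tendsto_exp_atBot.comp (tendsto_neg_atTop_atBot.comp h)

namespace Complex

theorem sinh_re (z : ℂ) : (sinh z).re = Real.sinh z.re * Real.cos z.im := by
  rw [sinh, div_re]
  simp [exp_re, exp_im, Real.sinh_eq, normSq]; ring

theorem sinh_im (z : ℂ) : (sinh z).im = Real.cosh z.re * Real.sin z.im := by
  rw [sinh, div_im]
  simp [exp_re, exp_im, Real.cosh_eq, normSq]; ring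

theorem cosh_re (z : ℂ) : (cosh z).re = Real.cosh z.re * Real.cos z.im := by
  rw [cosh, div_re]
  simp [exp_re, exp_im, Real.cosh_eq, normSq]; ring

theorem norm_sinh_le (z : ℂ) : ‖sinh z‖ ≤ ‖z‖ * Real.cosh z.re := by
  have hc : 1 ≤ Real.cosh z.re ^ 2 := one_le_pow₀ (Real.one_le_cosh _)
  have hx : Real.sinh z.re ^ 2 ≤ z.re ^ 2 * Real.cosh z.re ^ 2 := by
    have := Real.sinh_le_mul_cosh (abs_nonneg z.re)
    rw [← Real.abs_sinh, Real.cosh_abs] at this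
    simpa [mul_pow, sq_abs] using pow_le_pow_left₀ (abs_nonneg _) this 2
  have hy : Real.sin z.im ^ 2 ≤ z.im ^ 2 * Real.cosh z.re ^ 2 := by
    have := pow_le_pow_left₀ (abs_nonneg _) (Real.abs_sin_le_abs (x := z.im)) 2
    rw [sq_abs, sq_abs] at this
    nlinarith [sq_nonneg z.im]
  have hsq : ‖sinh z‖ ^ 2 = Real.sinh z.re ^ 2 + Real.sin z.im ^ 2 := by
    rw [Complex.sq_norm, normSq_apply, sinh_re, sinh_im]
    nlinarith [Real.sin_sq_add_cos_sq z.im, Real.cosh_sq z.re]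
  refine le_of_sq_le_sq ?_ (by positivity)
  rw [hsq, mul_pow, Complex.sq_norm, normSq_apply]
  nlinarith

theorem norm_cosh_le (z : ℂ) : ‖cosh z‖ ≤ Real.cosh z.re := by
  rw [cosh, Real.cosh_eq, norm_div, norm_ofNat]
  gcongr
  refine (norm_add_le _ _).trans_eq ?_
  rw [norm_exp, norm_exp, neg_re]

theorem norm_cpow_le_of_le_re {w : ℂ} {r a : ℝ} (hr : r ≤ 0) (ha : 0 < a) (haw : a ≤ w.re) :
    ‖w ^ (r : ℂ)‖ ≤ a ^ r := by
  rw [norm_cpow_real]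
  exact Real.rpow_le_rpow_of_nonpos ha (haw.trans (re_le_norm w)) hr

end Complex

theorem sinhc_eq_dslope : sinhc = dslope Complex.sinh 0 := by
  funext z
  rcases eq_or_ne z 0 with rfl | hz
  · simp [sinhc, Complex.deriv_sinh]
  · simp [sinhc, hz, dslope_of_ne, slope_def_field]

theorem differentiable_sinhc : Differentiable ℂ sinhc := by
  rw [sinhc_eq_dslope, ← differentiableOn_univ,
    Complex.differentiableOn_dslope Filter.univ_mem, differentiableOn_univ]
  exact Complex.differentiable_sinh

theorem norm_sinhc_le (z : ℂ) : ‖sinhc z‖ ≤ Real.cosh z.re := by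
  rcases eq_or_ne z 0 with rfl | hz
  · simp [sinhc]
  rw [sinhc, if_neg hz, norm_div, div_le_iff₀ (norm_pos_iff.mpr hz), mul_comm]
  exact Complex.norm_sinh_le z

theorem sinhc_re_pos {z : ℂ} (hz : |z.im| < Real.pi / 2) : 0 < (sinhc z).re := by
  rcases eq_or_ne z 0 with rfl | h0
  · simp [sinhc]
  have hcos : 0 < Real.cos z.im := Real.cos_pos_of_mem_Ioo (abs_lt.mp hz)
  have hπ : |z.im| < Real.pi := by linarith [Real.pi_pos]
  -- `Re (sinh z · conj z) = x sinh x cos y + y sin y cosh x`, both summands being `≥ 0`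
  have hnum :
      0 < Real.sinh z.re * Real.cos z.im * z.re + Real.cosh z.re * Real.sin z.im * z.im := by
    have hx : 0 ≤ z.re * Real.sinh z.re := by
      rcases eq_or_ne z.re 0 with h | h
      · simp [h]
      · exact (Real.mul_sinh_pos h).le
    have hc := Real.cosh_pos z.re
    rcases eq_or_ne z.im 0 with h | h
    · have hre : z.re ≠ 0 := fun hre => h0 (Complex.ext hre h)
      simpa [h, mul_comm] using Real.mul_sinh_pos hre
    · nlinarith [Real.mul_sin_pos hπ h]
  rw [sinhc, if_neg h0, Complex.div_re, Complex.sinh_re, Complex.sinh_im, ← add_div]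
  exact div_pos hnum (Complex.normSq_pos.mpr h0)

theorem sinhc_mem_slitPlane {z : ℂ} (hz : |z.im| < Real.pi / 2) : sinhc z ∈ Complex.slitPlane :=
  Complex.mem_slitPlane_iff.mpr (Or.inl (sinhc_re_pos hz))

theorem differentiableAt_sinhc_cpow {z : ℂ} (hz : |z.im| < Real.pi / 2) (s : ℂ) :
    DifferentiableAt ℂ (fun w => sinhc w ^ s) z :=
  (differentiable_sinhc z).cpow (differentiableAt_const s) (sinhc_mem_slitPlane hz)

theorem norm_sinhc_cpow_le (z : ℂ) {s : ℝ} (hs : 0 ≤ s) :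
    ‖sinhc z ^ (s : ℂ)‖ ≤ Real.cosh z.re ^ s := by
  rw [Complex.norm_cpow_real]
  exact Real.rpow_le_rpow (norm_nonneg _) (norm_sinhc_le z) hs

theorem norm_sinhc_cpow_half_mul_cosh_le (z : ℂ) :
    ‖sinhc z ^ ((1 : ℂ) / 2) * Complex.cosh z‖ ≤
      (1 + ‖z‖) * Real.cosh z.re ^ (3 / 2 : ℝ) := by
  have hsinhc : ‖sinhc z ^ ((1 : ℂ) / 2)‖ ≤ Real.cosh z.re ^ (1 / 2 : ℝ) := by
    simpa using norm_sinhc_cpow_le z (s := 1 / 2) (by norm_num)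
  calc ‖sinhc z ^ ((1 : ℂ) / 2) * Complex.cosh z‖
      ≤ Real.cosh z.re ^ (1 / 2 : ℝ) * Real.cosh z.re ^ (1 : ℝ) := by
        rw [norm_mul, Real.rpow_one]
        exact mul_le_mul hsinhc (Complex.norm_cosh_le z) (norm_nonneg _) (by positivity)
    _ = Real.cosh z.re ^ (3 / 2 : ℝ) := by rw [← Real.rpow_add (Real.cosh_pos _)]; norm_num
    _ ≤ (1 + ‖z‖) * Real.cosh z.re ^ (3 / 2 : ℝ) :=
        le_mul_of_one_le_left (by positivity) (by linarith [norm_nonneg z])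

theorem norm_mul_sinhc_cpow_three_halves_le (z : ℂ) :
    ‖z * sinhc z ^ ((3 : ℂ) / 2)‖ ≤ (1 + ‖z‖) * Real.cosh z.re ^ (3 / 2 : ℝ) := by
  have hsinhc : ‖sinhc z ^ ((3 : ℂ) / 2)‖ ≤ Real.cosh z.re ^ (3 / 2 : ℝ) := by
    simpa using norm_sinhc_cpow_le z (s := 3 / 2) (by norm_num)
  rw [norm_mul]
  exact mul_le_mul (by linarith) hsinhc (norm_nonneg _) (by linarith [norm_nonneg z])

theorem shc_pos (l : ℝ) : 0 < shc l := by
  rw [shc]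
  split_ifs with h
  · exact one_pos
  · rcases Ne.lt_or_gt h with hneg | hpos
    · exact div_pos_of_neg_of_neg (Real.sinh_neg_iff.mpr hneg) hneg
    · exact div_pos (Real.sinh_pos_iff.mpr hpos) hpos

theorem ofReal_shc (l : ℝ) : (shc l : ℂ) = sinhc l := by
  by_cases h : l = 0 <;> simp [shc, sinhc, h]

theorem ofReal_shc_rpow (l s : ℝ) : ((shc l ^ s : ℝ) : ℂ) = sinhc l ^ (s : ℂ) := by
  rw [Complex.ofReal_cpow (shc_pos l).le, ofReal_shc]

section StripShift

open Complex
open scoped Interval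

variable {f : ℂ → ℂ} {g : ℝ → ℝ} {φ : ℝ}

theorem integrable_comp_add_mul_I (hf : ∀ z : ℂ, z.im ∈ [[0, φ]] → ContinuousAt f z)
    (hg : Integrable g) (hfg : ∀ z : ℂ, z.im ∈ [[0, φ]] → ‖f z‖ ≤ g z.re)
    {y : ℝ} (hy : y ∈ [[0, φ]]) : Integrable fun x : ℝ => f (x + y * I) := by
  have hcont : Continuous fun x : ℝ => f (x + y * I) :=
    continuous_iff_continuousAt.mpr fun x =>
      (hf _ (by simpa using hy)).comp
        (by fun_prop : Continuous fun x : ℝ => (x : ℂ) + y * I).continuousAt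
  exact hg.mono' hcont.aestronglyMeasurable
    (.of_forall fun x => by simpa using hfg (x + y * I) (by simpa using hy))

theorem tendsto_integral_vertical_cocompact (hg : Tendsto g (cocompact ℝ) (𝓝 0))
    (hfg : ∀ z : ℂ, z.im ∈ [[0, φ]] → ‖f z‖ ≤ g z.re) :
    Tendsto (fun x : ℝ => ∫ y in (0 : ℝ)..φ, f (x + y * I)) (cocompact ℝ) (𝓝 0) := by
  refine squeeze_zero_norm (fun x => ?_) (by simpa using hg.mul_const |φ|)
  calc ‖∫ y in (0 : ℝ)..φ, f (x + y * I)‖ ≤ g x * |φ - 0| :=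
        intervalIntegral.norm_integral_le_of_norm_le_const fun y hy => by
          simpa using hfg (x + y * I) (by simpa using Set.uIoc_subset_uIcc hy)
    _ = g x * |φ| := by rw [sub_zero]

theorem integral_eq_integral_add_mul_I
    (hf : ∀ z : ℂ, z.im ∈ [[0, φ]] → DifferentiableAt ℂ f z)
    (hg : Integrable g) (hg0 : Tendsto g (cocompact ℝ) (𝓝 0))
    (hfg : ∀ z : ℂ, z.im ∈ [[0, φ]] → ‖f z‖ ≤ g z.re) :
    ∫ x : ℝ, f x = ∫ x : ℝ, f (x + φ * I) := by
  have hcont z hz := (hf z hz).continuousAt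
  have hbot : Integrable fun x : ℝ => f x := by
    simpa using integrable_comp_add_mul_I hcont hg hfg Set.left_mem_uIcc
  have htop := integrable_comp_add_mul_I hcont hg hfg Set.right_mem_uIcc
  have hvert := tendsto_integral_vertical_cocompact hg0 hfg
  have hrect : ∀ T : ℝ, (∫ x in -T..T, f x) - ∫ x in -T..T, f (x + φ * I) =
      I • (∫ y in (0 : ℝ)..φ, f (↑(-T) + y * I)) -
        I • ∫ y in (0 : ℝ)..φ, f (T + y * I) := by
    intro T
    have H := integral_boundary_rect_eq_zero_of_differentiableOn f (↑(-T)) (T + φ * I)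
      fun z hz => (hf z (by simpa using (mem_reProdIm.mp hz).2)).differentiableWithinAt
    simp only [add_re, add_im, ofReal_re, ofReal_im, mul_re, mul_im, I_re, I_im, mul_zero,
      mul_one, sub_zero, add_zero, zero_add, ofReal_zero, zero_mul] at H
    linear_combination H
  have hlim : Tendsto (fun T : ℝ => (∫ x in -T..T, f x) - ∫ x in -T..T, f (x + φ * I)) atTop
      (𝓝 ((∫ x : ℝ, f x) - ∫ x : ℝ, f (x + φ * I))) :=
    (intervalIntegral_tendsto_integral hbot tendsto_neg_atTop_atBot tendsto_id).sub
      (intervalIntegral_tendsto_integral htop tendsto_neg_atTop_atBot tendsto_id)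
  have hlim0 : Tendsto (fun T : ℝ => (∫ x in -T..T, f x) - ∫ x in -T..T, f (x + φ * I)) atTop
      (𝓝 0) := by
    simp_rw [hrect]
    have hleft := hvert.comp (tendsto_neg_atTop_atBot.mono_right atBot_le_cocompact)
    simpa using (hleft.const_smul I).sub ((hvert.mono_left atTop_le_cocompact).const_smul I)
  exact sub_eq_zero.mp (tendsto_nhds_unique hlim hlim0)

end StripShift

section CoshWeight

open Complex
open scoped Interval

variable {h : ℂ → ℂ} {n : ℕ} {φ : ℝ} {z : ℂ}

theorem abs_im_le_of_mem_uIcc (hz : z.im ∈ [[0, φ]]) : |z.im| ≤ |φ| := by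
  simpa using Set.abs_sub_left_of_mem_uIcc hz

theorem cos_mul_cosh_le_re_cosh_sub_mul_I (hφ : |φ| ≤ Real.pi) (hz : z.im ∈ [[0, φ]]) :
    Real.cos φ * Real.cosh z.re ≤ (cosh (z - I * φ)).re := by
  have hcos : Real.cos φ ≤ Real.cos (z.im - φ) := by
    rw [← Real.cos_abs φ, ← Real.cos_abs (z.im - φ), abs_sub_comm]
    exact Real.cos_le_cos_of_nonneg_of_le_pi (abs_nonneg _) hφ
      (by simpa using Set.abs_sub_right_of_mem_uIcc hz)
  rw [cosh_re, mul_comm]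
  simpa using mul_le_mul_of_nonneg_left hcos (Real.cosh_pos z.re).le

theorem norm_cosh_sub_mul_I_cpow_le (hφ : |φ| < Real.pi / 2) (hz : z.im ∈ [[0, φ]]) (n : ℕ) :
    ‖cosh (z - I * φ) ^ (-(n : ℂ) - 3 / 2)‖ ≤
      (Real.cos φ * Real.cosh z.re) ^ (-(n : ℝ) - 3 / 2) := by
  have hcos : 0 < Real.cos φ := Real.cos_pos_of_mem_Ioo (abs_lt.mp hφ)
  have := norm_cpow_le_of_le_re (r := -(n : ℝ) - 3 / 2) (by linarith [n.cast_nonneg (α := ℝ)])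
    (by positivity) (cos_mul_cosh_le_re_cosh_sub_mul_I (by linarith [Real.pi_pos]) hz)
  simpa using this

theorem norm_mul_cosh_sub_mul_I_cpow_le (hn : 1 ≤ n) (hφ : |φ| < Real.pi / 2)
    (hz : z.im ∈ [[0, φ]]) (hhz : ‖h z‖ ≤ (1 + ‖z‖) * Real.cosh z.re ^ (3 / 2 : ℝ)) :
    ‖h z * cosh (z - I * φ) ^ (-(n : ℂ) - 3 / 2)‖ ≤
      4 * (1 + |φ|) * Real.cos φ ^ (-(n : ℝ) - 3 / 2) * Real.exp (-(1 / 2) * |z.re|) := by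
  set x := z.re
  have hcos : 0 < Real.cos φ := Real.cos_pos_of_mem_Ioo (abs_lt.mp hφ)
  have hc : 0 < Real.cosh x := Real.cosh_pos x
  have hnorm : 1 + ‖z‖ ≤ (1 + |φ|) * (1 + |x|) := by
    nlinarith [norm_le_abs_re_add_abs_im z, abs_im_le_of_mem_uIcc hz, abs_nonneg x, abs_nonneg φ]
  have hpow : Real.cosh x ^ (-(n : ℝ)) ≤ (Real.cosh x)⁻¹ := by
    rw [← Real.rpow_neg_one]
    exact Real.rpow_le_rpow_of_exponent_le (Real.one_le_cosh x) (by simpa using hn)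
  calc ‖h z * cosh (z - I * φ) ^ (-(n : ℂ) - 3 / 2)‖
      ≤ (1 + ‖z‖) * Real.cosh x ^ (3 / 2 : ℝ) *
          (Real.cos φ * Real.cosh x) ^ (-(n : ℝ) - 3 / 2) := by
        rw [norm_mul]
        exact mul_le_mul hhz (norm_cosh_sub_mul_I_cpow_le hφ hz n) (norm_nonneg _) (by positivity)
    _ = Real.cos φ ^ (-(n : ℝ) - 3 / 2) * (1 + ‖z‖) * Real.cosh x ^ (-(n : ℝ)) := by
        rw [Real.mul_rpow hcos.le hc.le, mul_mul_mul_comm, ← Real.rpow_add hc]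
        ring_nf
    _ ≤ Real.cos φ ^ (-(n : ℝ) - 3 / 2) * ((1 + |φ|) * (1 + |x|)) * (Real.cosh x)⁻¹ := by
        gcongr
    _ = (1 + |φ|) * Real.cos φ ^ (-(n : ℝ) - 3 / 2) * ((1 + |x|) / Real.cosh x) := by
        ring
    _ ≤ (1 + |φ|) * Real.cos φ ^ (-(n : ℝ) - 3 / 2) * (4 * Real.exp (-(1 / 2) * |x|)) := by
        gcongr
        exact Real.one_add_abs_div_cosh_le x
    _ = _ := by ring

theorem integral_mul_cosh_sub_mul_I_cpow_eq (hn : 1 ≤ n) (hφ : |φ| < Real.pi / 2)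
    (hd : ∀ z : ℂ, |z.im| < Real.pi / 2 → DifferentiableAt ℂ h z)
    (hb : ∀ z : ℂ, |z.im| < Real.pi / 2 →
      ‖h z‖ ≤ (1 + ‖z‖) * Real.cosh z.re ^ (3 / 2 : ℝ)) :
    Integrable (fun x : ℝ => h x * cosh (x - I * φ) ^ (-(n : ℂ) - 3 / 2)) ∧
    Integrable (fun x : ℝ => h (x + I * φ) * cosh (x : ℂ) ^ (-(n : ℂ) - 3 / 2)) ∧
    ∫ x : ℝ, h x * cosh (x - I * φ) ^ (-(n : ℂ) - 3 / 2) =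
      ∫ x : ℝ, h (x + I * φ) * cosh (x : ℂ) ^ (-(n : ℂ) - 3 / 2) := by
  set f : ℂ → ℂ := fun w => h w * cosh (w - I * φ) ^ (-(n : ℂ) - 3 / 2) with hf
  have hcos : 0 < Real.cos φ := Real.cos_pos_of_mem_Ioo (abs_lt.mp hφ)
  have hstrip : ∀ z : ℂ, z.im ∈ [[0, φ]] → |z.im| < Real.pi / 2 :=
    fun z hz => (abs_im_le_of_mem_uIcc hz).trans_lt hφ
  have hfd : ∀ z : ℂ, z.im ∈ [[0, φ]] → DifferentiableAt ℂ f z := by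
    intro z hz
    have hslit : cosh (z - I * φ) ∈ slitPlane := mem_slitPlane_iff.mpr <| Or.inl <|
      (mul_pos hcos (Real.cosh_pos _)).trans_le
        (cos_mul_cosh_le_re_cosh_sub_mul_I (by linarith [Real.pi_pos]) hz)
    exact (hd z (hstrip z hz)).mul <|
      (differentiable_cosh.differentiableAt.comp z (differentiableAt_id.sub_const _)).cpow
        (differentiableAt_const _) hslit
  set g : ℝ → ℝ := fun x =>
    4 * (1 + |φ|) * Real.cos φ ^ (-(n : ℝ) - 3 / 2) * Real.exp (-(1 / 2) * |x|)
  have hfg : ∀ z : ℂ, z.im ∈ [[0, φ]] → ‖f z‖ ≤ g z.re :=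
    fun z hz => norm_mul_cosh_sub_mul_I_cpow_le hn hφ hz (hb z (hstrip z hz))
  have hg : Integrable g := (integrable_exp_neg_mul_abs (by norm_num)).const_mul _
  have hg0 : Tendsto g (cocompact ℝ) (𝓝 0) := by
    simpa only [mul_zero] using (tendsto_exp_neg_mul_abs_cocompact (b := 1 / 2)
      (by norm_num)).const_mul (4 * (1 + |φ|) * Real.cos φ ^ (-(n : ℝ) - 3 / 2))
  have hline (x : ℝ) :
      f (x + φ * I) = h (x + I * φ) * cosh (x : ℂ) ^ (-(n : ℂ) - 3 / 2) := by
    simp only [hf, mul_comm (φ : ℂ) I, add_sub_cancel_right]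
  have hfc z hz := (hfd z hz).continuousAt
  refine ⟨by simpa using integrable_comp_add_mul_I hfc hg hfg Set.left_mem_uIcc, ?_, ?_⟩
  · simpa only [hline] using integrable_comp_add_mul_I hfc hg hfg Set.right_mem_uIcc
  · simpa only [hline] using integral_eq_integral_add_mul_I hfd hg hg0 hfg

end CoshWeight

theorem stmt10 (n : ℕ) (hn : 1 ≤ n) (φ : ℝ)
    (hφ : φ ∈ Set.Ioo (-(Real.pi / 2)) (Real.pi / 2)) :
    Integrable (fun l : ℝ => ((shc l ^ ((1 : ℝ) / 2) * Real.cosh l : ℝ) : ℂ) *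
        Complex.cosh ((l : ℂ) - Complex.I * φ) ^ (-(n : ℂ) - 3 / 2)) volume ∧
    Integrable (fun l : ℝ => ((l * shc l ^ ((3 : ℝ) / 2) : ℝ) : ℂ) *
        Complex.cosh ((l : ℂ) - Complex.I * φ) ^ (-(n : ℂ) - 3 / 2)) volume ∧
    Integrable (fun l : ℝ => sinhc ((l : ℂ) + Complex.I * φ) ^ ((1 : ℂ) / 2) *
        Complex.cosh ((l : ℂ) + Complex.I * φ) *
        Complex.cosh (l : ℂ) ^ (-(n : ℂ) - 3 / 2)) volume ∧
    Integrable (fun l : ℝ => ((l : ℂ) + Complex.I * φ) *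
        sinhc ((l : ℂ) + Complex.I * φ) ^ ((3 : ℂ) / 2) *
        Complex.cosh (l : ℂ) ^ (-(n : ℂ) - 3 / 2)) volume ∧
    (∫ l : ℝ, ((shc l ^ ((1 : ℝ) / 2) * Real.cosh l : ℝ) : ℂ) *
        Complex.cosh ((l : ℂ) - Complex.I * φ) ^ (-(n : ℂ) - 3 / 2)) =
      An n (Complex.I * φ) ∧
    (∫ l : ℝ, ((l * shc l ^ ((3 : ℝ) / 2) : ℝ) : ℂ) *
        Complex.cosh ((l : ℂ) - Complex.I * φ) ^ (-(n : ℂ) - 3 / 2)) =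
      Bn n (Complex.I * φ) := by
  have hφ' : |φ| < Real.pi / 2 := abs_lt.mpr hφ
  obtain ⟨hA₀, hAφ, hA⟩ := integral_mul_cosh_sub_mul_I_cpow_eq hn hφ'
    (h := fun w => sinhc w ^ ((1 : ℂ) / 2) * Complex.cosh w)
    (fun z hz => (differentiableAt_sinhc_cpow hz _).mul (Complex.differentiable_cosh z))
    fun z _ => norm_sinhc_cpow_half_mul_cosh_le z
  obtain ⟨hB₀, hBφ, hB⟩ := integral_mul_cosh_sub_mul_I_cpow_eq hn hφ'
    (h := fun w => w * sinhc w ^ ((3 : ℂ) / 2))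
    (fun z hz => differentiableAt_id.mul (differentiableAt_sinhc_cpow hz _))
    fun z _ => norm_mul_sinhc_cpow_three_halves_le z
  have hA_real (l : ℝ) : ((shc l ^ ((1 : ℝ) / 2) * Real.cosh l : ℝ) : ℂ) =
      sinhc l ^ ((1 : ℂ) / 2) * Complex.cosh l := by
    push_cast [ofReal_shc_rpow]; norm_num
  have hB_real (l : ℝ) :
      ((l * shc l ^ ((3 : ℝ) / 2) : ℝ) : ℂ) = l * sinhc l ^ ((3 : ℂ) / 2) := by
    push_cast [ofReal_shc_rpow]; norm_num
  simp only [hA_real, hB_real, An, Bn]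
  exact ⟨hA₀, hB₀, hAφ, hBφ, hA, hB⟩
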